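/- arXiv:2409.06425 — 6 statements merged into one kernel-verified Lean document; each statement's English description precedes it below -/
import Mathlib

section
/- Let r < k be positive integers and let n ≤ m be positive integers. Then S(m,k,r) ≤ (⌊m/n⌋ + 1)^r · S(n,k,r), where S(n,k,r) is the minimum size of a covering (k−r)-insertion code over the alphabet [n] = {0,…,n−1}. -/
open MeasureTheory Filter Topology ENNReal

/-- `x` covers `a` if `x` is a subsequence of `a`. -/
def Covers {X : Type*} {r k : ℕ} (x : Fin r → X) (a : Fin k → X) : Prop :=
  ∃ g : Fin r → Fin k, StrictMono g ∧ ∀ i, a (g i) = x i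

/-- `C ⊆ X^r` is a covering `(k-r)`-insertion code over `X`: every sequence in `X^k`
is covered by some sequence in `C`. -/
def IsCoveringCode {X : Type*} (r k : ℕ) (C : Set (Fin r → X)) : Prop :=
  ∀ a : Fin k → X, ∃ x ∈ C, Covers x a

/-- Minimum size of a covering `(k-r)`-insertion code over the alphabet `[n]`. -/
noncomputable def covNum (n k r : ℕ) : ℕ :=
  sInf {m | ∃ C : Finset (Fin r → Fin n), IsCoveringCode r k (↑C : Set (Fin r → Fin n)) ∧ C.card = m}

/-- The unit cube `[0,1]^r`. -/
def unitCube (r : ℕ) : Set (Fin r → ℝ) := {x | ∀ i, x i ∈ Set.Icc (0 : ℝ) 1}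

/-- `C ⊆ [0,1]^r` covers `[0,1]^k`. -/
def CoversCube (r k : ℕ) (C : Set (Fin r → ℝ)) : Prop :=
  ∀ a ∈ unitCube k, ∃ x ∈ C, Covers x a

/-- Delete the `i`-th coordinate of a length `r+1` sequence. -/
def deleteAt {X : Type*} {r : ℕ} (i : Fin (r + 1)) (x : Fin (r + 1) → X) : Fin r → X :=
  x ∘ i.succAbove

/-- `extSet C i` is the set `C_i` of sequences in `X^{r+1}` whose subsequence obtained by
deleting the `i`-th coordinate belongs to `C`. -/
def extSet {X : Type*} {r : ℕ} (C : Set (Fin r → X)) (i : Fin (r + 1)) :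
    Set (Fin (r + 1) → X) :=
  {x | deleteAt i x ∈ C}

/-- A set of sequences is symmetric if it is closed under permuting the coordinates. -/
def IsSymmetric {X : Type*} {k : ℕ} (M : Set (Fin k → X)) : Prop :=
  ∀ x ∈ M, ∀ σ : Equiv.Perm (Fin k), x ∘ σ ∈ M

/-- The symmetric closure of a set of sequences. -/
def SymClosure {X : Type*} {k : ℕ} (M : Set (Fin k → X)) : Set (Fin k → X) :=
  {x | ∃ σ : Equiv.Perm (Fin k), x ∘ σ ∈ M}

/-- A Turán `(n,k,r)`-system: a family of `r`-element subsets of `[n]` such that every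
`k`-element subset of `[n]` contains a member of the family. -/
def IsTuranSystem (n k r : ℕ) (F : Finset (Finset (Fin n))) : Prop :=
  (∀ A ∈ F, A.card = r) ∧ ∀ K : Finset (Fin n), K.card = k → ∃ A ∈ F, A ⊆ K

/-- Minimum size of a Turán `(n,k,r)`-system. -/
noncomputable def turanNum (n k r : ℕ) : ℕ :=
  sInf {m | ∃ F : Finset (Finset (Fin n)), IsTuranSystem n k r F ∧ F.card = m}

/-- For positive integers `r < k` and `0 < n ≤ m`,
`S(m,k,r) ≤ (⌊m/n⌋ + 1)^r · S(n,k,r)`. -/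
theorem covNum_le_of_le {r k n m : ℕ} (hr : 0 < r) (hrk : r < k) (hn : 0 < n)
    (hnm : n ≤ m) :
    covNum m k r ≤ (m / n + 1) ^ r * covNum n k r := by
  have hm : 0 < m := lt_of_lt_of_le hn hnm
  -- the set defining covNum n k r is nonempty
  have hne : {s | ∃ C : Finset (Fin r → Fin n),
      IsCoveringCode r k (↑C : Set (Fin r → Fin n)) ∧ C.card = s}.Nonempty := by
    refine ⟨(Finset.univ : Finset (Fin r → Fin n)).card, Finset.univ, ?_, rfl⟩
    intro a
    exact ⟨a ∘ Fin.castLE hrk.le, by simp, Fin.castLE hrk.le,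
      fun i j hij => by simpa using hij, fun i => rfl⟩
  obtain ⟨C, hC, hCcard⟩ := Nat.sInf_mem hne
  set q := m / n + 1 with hq
  -- the scaling map
  have hval : ∀ (x : Fin r → Fin n) (β : Fin r → Fin q) (i : Fin r),
      min (n * (β i : ℕ) + (x i : ℕ)) (m - 1) < m := fun x β i =>
    lt_of_le_of_lt (min_le_right _ _) (Nat.sub_lt hm one_pos)
  set f : (Fin r → Fin n) × (Fin r → Fin q) → (Fin r → Fin m) :=
    fun p i => ⟨min (n * (p.2 i : ℕ) + (p.1 i : ℕ)) (m - 1), hval p.1 p.2 i⟩ with hf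
  set D : Finset (Fin r → Fin m) :=
    Finset.image f (C ×ˢ (Finset.univ : Finset (Fin r → Fin q))) with hD
  have hDcov : IsCoveringCode r k (↑D : Set (Fin r → Fin m)) := by
    intro a
    set c : Fin k → Fin n := fun j => ⟨(a j : ℕ) % n, Nat.mod_lt _ hn⟩ with hc
    obtain ⟨x, hxC, g, hg, hgx⟩ := hC c
    have hbl : ∀ j : Fin k, (a j : ℕ) / n < q := by
      intro j
      have : (a j : ℕ) / n ≤ m / n := Nat.div_le_div_right (a j).2.le
      omega
    set β : Fin r → Fin q := fun i => ⟨(a (g i) : ℕ) / n, hbl (g i)⟩ with hβ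
    refine ⟨f (x, β), ?_, g, hg, ?_⟩
    · exact Finset.mem_coe.mpr (Finset.mem_image.mpr
        ⟨(x, β), Finset.mem_product.mpr ⟨hxC, Finset.mem_univ _⟩, rfl⟩)
    · intro i
      have hxv : (x i : ℕ) = (a (g i) : ℕ) % n := by
        rw [← hgx i]
      apply Fin.ext
      show (a (g i) : ℕ) = min (n * ((a (g i) : ℕ) / n) + (x i : ℕ)) (m - 1)
      rw [hxv, Nat.div_add_mod]
      have := (a (g i)).2
      omega
  calc covNum m k r ≤ D.card := Nat.sInf_le ⟨D, hDcov, rfl⟩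
    _ ≤ (C ×ˢ (Finset.univ : Finset (Fin r → Fin q))).card := Finset.card_image_le
    _ = C.card * q ^ r := by
        rw [Finset.card_product, Finset.card_univ]
        simp [Fintype.card_fun]
    _ = q ^ r * covNum n k r := by rw [hCcard, Nat.mul_comm]; rfl
end

section
/- For all positive integers r < k, the sequence of optimal code densities S(n,k,r)/n^r converges as n → ∞ to a limit s(k,r), and moreover S(n,k,r)/n^r ≥ s(k,r) for every positive integer n. -/
open MeasureTheory Filter Topology ENNReal

/-!
Pulling an optimal code over `[n]` back along the block map `i ↦ ⌊i / q⌋ : [N] → [n]`, whose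
fibres have at most `q` elements, gives a covering code over `[N]` with at most
`q ^ r * S(n,k,r)` words whenever `N ≤ n q`. Taking `q = ⌊N / n⌋ + 1` yields
`S(N,k,r)/N^r ≤ S(n,k,r)/n^r * (1 + n/N)^r`, so the upper limit of the densities is at most
each of them, and the densities converge to their infimum over `n ≥ 1`.
-/

open Finset in
lemma card_filter_comp_mem_le {X Y : Type*} [Fintype X] [DecidableEq Y] {r q : ℕ}
    (φ : X → Y) (hφ : ∀ y, #{x | φ x = y} ≤ q) (C : Finset (Fin r → Y)) :
    #{x : Fin r → X | φ ∘ x ∈ C} ≤ q ^ r * #C := by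
  refine card_le_mul_card_image_of_maps_to (f := (φ ∘ ·)) (fun x hx => (mem_filter.1 hx).2) _
    fun c _ => ?_
  calc #{x ∈ ({x : Fin r → X | φ ∘ x ∈ C} : Finset _) | φ ∘ x = c}
      ≤ #(Fintype.piFinset fun i => ({x | φ x = c i} : Finset X)) :=
        card_le_card fun x hx => by
          simp only [mem_filter] at hx
          simp [← hx.2]
    _ ≤ q ^ r := by
        rw [Fintype.card_piFinset]
        simpa using prod_le_pow_card univ _ q fun i _ => hφ (c i)

lemma IsCoveringCode.preimage {X Y : Type*} {r k : ℕ} {C : Set (Fin r → Y)}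
    (hC : IsCoveringCode r k C) (φ : X → Y) : IsCoveringCode r k {x : Fin r → X | φ ∘ x ∈ C} := by
  intro a
  obtain ⟨c, hc, g, hg, hgc⟩ := hC (φ ∘ a)
  have : φ ∘ a ∘ g = c := funext hgc
  exact ⟨a ∘ g, by simpa [this], g, hg, fun _ => rfl⟩

lemma covNum_le_card {n k r : ℕ} {C : Finset (Fin r → Fin n)}
    (hC : IsCoveringCode r k (↑C : Set (Fin r → Fin n))) :
    covNum n k r ≤ C.card :=
  Nat.sInf_le ⟨C, hC, rfl⟩

lemma exists_isCoveringCode_card_eq_covNum {n k r : ℕ} (hrk : r ≤ k) :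
    ∃ C : Finset (Fin r → Fin n),
      IsCoveringCode r k (↑C : Set (Fin r → Fin n)) ∧ C.card = covNum n k r := by
  refine Nat.sInf_mem (s := {m | ∃ C : Finset (Fin r → Fin n),
    IsCoveringCode r k (↑C : Set (Fin r → Fin n)) ∧ C.card = m}) ⟨_, Finset.univ, fun a => ?_, rfl⟩
  exact ⟨a ∘ Fin.castLE hrk, by simp, Fin.castLE hrk, Fin.strictMono_castLE hrk, fun _ => rfl⟩

open Finset in
lemma covNum_le_mul_of_fiber_card_le {n N k r q : ℕ} (hrk : r ≤ k) (φ : Fin N → Fin n)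
    (hφ : ∀ j, #{i | φ i = j} ≤ q) : covNum N k r ≤ q ^ r * covNum n k r := by
  obtain ⟨C, hC, hcard⟩ := exists_isCoveringCode_card_eq_covNum (n := n) hrk
  calc covNum N k r ≤ #{x : Fin r → Fin N | φ ∘ x ∈ C} :=
        covNum_le_card (by simpa using hC.preimage φ)
    _ ≤ q ^ r * covNum n k r := hcard ▸ card_filter_comp_mem_le φ hφ C

open Finset in
lemma covNum_le_mul_of_le_mul {n N k r q : ℕ} (hrk : r ≤ k) (hq : 0 < q) (hN : N ≤ n * q) :
    covNum N k r ≤ q ^ r * covNum n k r := by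
  refine covNum_le_mul_of_fiber_card_le hrk
    (fun i => ⟨i / q, (Nat.div_lt_iff_lt_mul hq).2 (i.2.trans_le hN)⟩) fun j => ?_
  calc #{i : Fin N | (⟨i / q, _⟩ : Fin n) = j} ≤ #(range q) := by
        refine card_le_card_of_injOn (fun i => (i : ℕ) % q)
          (fun i _ => mem_coe.2 (mem_range.2 (Nat.mod_lt _ hq))) fun i hi i' hi' h => ?_
        have hdiv : (i : ℕ) / q = i' / q :=
          congrArg Fin.val ((mem_filter.1 hi).2.trans (mem_filter.1 hi').2.symm)
        rw [Fin.ext_iff, ← Nat.div_add_mod i q, ← Nat.div_add_mod i' q, hdiv]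
        exact congrArg (q * (i' / q) + ·) h
    _ = q := card_range q

lemma covNum_div_pow_le {n N k r : ℕ} (hrk : r ≤ k) (hn : 0 < n) (hN : 0 < N) :
    (covNum N k r : ℝ) / N ^ r ≤ covNum n k r / n ^ r * (1 + n / N) ^ r := by
  set q := N / n + 1
  have hNq : N ≤ n * q := (Nat.lt_mul_div_succ N hn).le
  have hqN : n * q ≤ N + n := by simpa [q, mul_add] using Nat.mul_div_le N n
  have hcov : (covNum N k r : ℝ) ≤ q ^ r * covNum n k r := by
    exact_mod_cast covNum_le_mul_of_le_mul hrk (N / n).succ_pos hNq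
  have hq : (n : ℝ) * q ≤ N * (1 + n / N) := by
    rw [mul_add, mul_div_cancel₀ _ (by positivity), mul_one]
    exact_mod_cast hqN
  calc (covNum N k r : ℝ) / N ^ r ≤ q ^ r * covNum n k r / N ^ r := by gcongr
    _ = covNum n k r / n ^ r * ((n * q) / N) ^ r := by
        rw [div_pow, mul_pow]
        field_simp
    _ ≤ covNum n k r / n ^ r * (1 + n / N) ^ r := by
        gcongr
        rwa [div_le_iff₀ (by positivity), mul_comm _ (N : ℝ)]

lemma tendsto_iInf_of_le_mul {f : ℕ → ℝ} (hf : ∀ n, 0 ≤ f n) {c : ℕ → ℕ → ℝ}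
    (hc : ∀ n, Tendsto (c n) atTop (𝓝 1)) (hle : ∀ n, ∀ᶠ N in atTop, f N ≤ f n * c n N) :
    Tendsto f atTop (𝓝 (⨅ n, f n)) := by
  have hbdd : BddBelow (Set.range f) := ⟨0, Set.forall_mem_range.2 hf⟩
  refine tendsto_order.2 ⟨fun a ha => .of_forall fun N => ha.trans_le (ciInf_le hbdd N),
    fun b hb => ?_⟩
  obtain ⟨n, hn⟩ := exists_lt_of_ciInf_lt hb
  have hlim : Tendsto (fun N => f n * c n N) atTop (𝓝 (f n)) := by
    simpa using (hc n).const_mul (f n)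
  filter_upwards [hle n, hlim.eventually_lt_const hn] with N h1 h2
  exact h1.trans_lt h2

theorem covNum_density_tendsto_general {r k : ℕ} (hrk : r < k) :
    ∃ s : ℝ, Tendsto (fun n : ℕ => (covNum n k r : ℝ) / (n : ℝ) ^ r) atTop (𝓝 s) ∧
      ∀ n : ℕ, 0 < n → s ≤ (covNum n k r : ℝ) / (n : ℝ) ^ r := by
  set f : ℕ → ℝ := fun n => (covNum n k r : ℝ) / (n : ℝ) ^ r
  have hf : ∀ n, 0 ≤ f (n + 1) := fun n => by positivity
  -- `f 0 = 0` (the empty code covers the empty set `[0]^k`), so the infimum is over `n ≥ 1`.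
  refine ⟨⨅ n, f (n + 1), ?_, fun n hn => ?_⟩
  · refine (tendsto_add_atTop_iff_nat 1).1 (tendsto_iInf_of_le_mul hf
      (c := fun n N => (1 + (n + 1 : ℕ) / (N + 1 : ℕ) : ℝ) ^ r) (fun n => ?_) fun n =>
        .of_forall fun N => covNum_div_pow_le hrk.le n.succ_pos N.succ_pos)
    have h := (tendsto_const_div_atTop_nhds_zero_nat ((n + 1 : ℕ) : ℝ)).comp
      (tendsto_add_atTop_nat 1)
    simpa using ((tendsto_const_nhds (x := (1 : ℝ))).add h).pow r
  · obtain ⟨m, rfl⟩ := Nat.exists_eq_add_one_of_ne_zero hn.ne'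
    exact ciInf_le ⟨0, Set.forall_mem_range.2 hf⟩ m

/-- For positive integers `r < k`, the densities `S(n,k,r)/n^r` converge to a
limit `s(k,r)` as `n → ∞`, and `S(n,k,r)/n^r ≥ s(k,r)` for every positive integer `n`. -/
theorem covNum_density_tendsto {r k : ℕ} (hr : 0 < r) (hrk : r < k) :
    ∃ s : ℝ, Tendsto (fun n : ℕ => (covNum n k r : ℝ) / (n : ℝ) ^ r) atTop (𝓝 s) ∧
      ∀ n : ℕ, 0 < n → s ≤ (covNum n k r : ℝ) / (n : ℝ) ^ r :=
  covNum_density_tendsto_general hrk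
end

section
/- Let r ≥ 2 be an integer and let λ denote Lebesgue measure on [0,1]^r. If C ⊆ [0,1]^r is a Lebesgue measurable set that covers [0,1]^{r+1} (i.e., every sequence in [0,1]^{r+1} has a length-r subsequence belonging to C), then λ(C) ≥ 1/r. -/
open MeasureTheory Filter Topology ENNReal

/-!
Let `D = [0,1]^r \ C`, `m = λ(D)`, and let `d_i(y)` be the length of the fibre of `D` obtained by
inserting a free coordinate at position `i` into `y ∈ [0,1]^(r-1)`, so that `∫ d_i = m`.
Insert `v` at position `q` into some `x ∈ D`: a covering subsequence in `C` cannot be `x`, so it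
deletes some coordinate `j` of `x`, i.e. it lies in the fibre through `x` without `j` at position
`j.predAbove q`. Hence these `r` fibres have no common point and
`∑_j d_{j.predAbove q}(x without j) ≤ r - 1`. Integrating over `D` (Fubini) and summing over `q`
gives `∫ S² + ∫ ∑_j d_j² ≤ (r + 1)(r - 1) m` for `S = ∑_j d_j`; with `S² ≤ r ∑_j d_j²` this yields
`∫ S² ≤ r (r - 1) m`, while Cauchy–Schwarz on the unit cube gives `(r m)² = (∫ S)² ≤ ∫ S²`.
So `r m ≤ r - 1`, i.e. `λ(C) ≥ 1 - m ≥ 1 / r`.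
-/

namespace Fin

theorem removeNth_succAbove_insertNth {α : Type*} {n : ℕ} (q : Fin (n + 2)) (j : Fin (n + 1))
    (v : α) (x : Fin (n + 1) → α) :
    removeNth (q.succAbove j) (insertNth (α := fun _ => α) q v x)
      = insertNth (α := fun _ => α) (j.predAbove q) v (removeNth j x) := by
  refine (insertNth_eq_iff.mpr ⟨?_, funext fun k => ?_⟩).symm
  · simp [removeNth, succAbove_succAbove_predAbove]
  · simp [removeNth, succAbove_succAbove_succAbove_predAbove]

theorem sum_predAbove {M : Type*} [AddCommMonoid M] {n : ℕ} (j : Fin (n + 1))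
    (f : Fin (n + 1) → M) :
    ∑ q : Fin (n + 2), f (j.predAbove q) = ∑ p, f p + f j := by
  rw [sum_univ_succAbove _ j.castSucc, predAbove_castSucc_self, add_comm]
  simp [predAbove_succAbove]

theorem sum_sum_predAbove_mul {R : Type*} [CommSemiring R] {n : ℕ} (f : Fin (n + 1) → R) :
    ∑ q : Fin (n + 2), ∑ j : Fin (n + 1), f (j.predAbove q) * f j
      = (∑ j, f j) ^ 2 + ∑ j, f j ^ 2 := by
  rw [Finset.sum_comm]
  simp only [← Finset.sum_mul, sum_predAbove, add_mul, Finset.sum_add_distrib, ← Finset.mul_sum,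
    sq]

theorem exists_eq_succAbove_of_strictMono {n : ℕ} {g : Fin n → Fin (n + 1)} (hg : StrictMono g) :
    ∃ t : Fin (n + 1), g = t.succAbove := by
  obtain ⟨t, ht⟩ : ∃ t, t ∉ Set.range g := by
    by_contra! h
    simpa using Fintype.card_le_of_surjective g h
  refine ⟨t, ?_⟩
  have := Finset.orderEmbOfFin_unique (s := {t}ᶜ) (by simp [Finset.card_compl])
    (fun u => by simpa [eq_comm] using fun h => ht ⟨u, h⟩) hg
  rw [this, Finset.orderEmbOfFin_compl_singleton_eq_succAboveOrderEmb]
  rfl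

end Fin

theorem Covers.exists_eq_removeNth {X : Type*} {n : ℕ} {x : Fin n → X} {a : Fin (n + 1) → X}
    (h : Covers x a) : ∃ t, x = Fin.removeNth t a := by
  obtain ⟨g, hg, hga⟩ := h
  obtain ⟨t, rfl⟩ := Fin.exists_eq_succAbove_of_strictMono hg
  exact ⟨t, funext fun i => (hga i).symm⟩

theorem Covers.exists_eq_insertNth_predAbove {X : Type*} {n : ℕ} {z x : Fin (n + 1) → X}
    {q : Fin (n + 2)} {v : X} (h : Covers z (Fin.insertNth q v x)) (hzx : z ≠ x) :
    ∃ j : Fin (n + 1), z = Fin.insertNth (j.predAbove q) v (Fin.removeNth j x) := by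
  obtain ⟨t, rfl⟩ := h.exists_eq_removeNth
  obtain ⟨j, rfl⟩ := Fin.exists_succAbove_eq (x := t) (y := q) (by rintro rfl; simp at hzx)
  exact ⟨j, Fin.removeNth_succAbove_insertNth q j v x⟩

section Sections

variable {α : Type*} {n : ℕ}

theorem measurable_insertNth_uncurry [MeasurableSpace α] (i : Fin (n + 1)) :
    Measurable fun p : α × (Fin n → α) => Fin.insertNth (α := fun _ => α) i p.1 p.2 :=
  (MeasurableEquiv.piFinSuccAbove (fun _ => α) i).symm.measurable

variable [MeasureSpace α]

noncomputable def sectionVolume (D : Set (Fin (n + 1) → α)) (i : Fin (n + 1))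
    (y : Fin n → α) : ℝ≥0∞ :=
  volume {v : α | Fin.insertNth i v y ∈ D}

variable {D : Set (Fin (n + 1) → α)}

theorem measurableSet_insertNth_mem (hD : MeasurableSet D) (i : Fin (n + 1)) (y : Fin n → α) :
    MeasurableSet {v : α | Fin.insertNth i v y ∈ D} :=
  (measurable_insertNth_uncurry i).comp measurable_prodMk_right hD

variable [SigmaFinite (volume : Measure α)]

theorem measurable_sectionVolume (hD : MeasurableSet D) (i : Fin (n + 1)) :
    Measurable (sectionVolume D i) :=
  measurable_measure_prodMk_right (measurable_insertNth_uncurry i hD)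

theorem setLIntegral_comp_removeNth (hD : MeasurableSet D) (i : Fin (n + 1))
    {f : (Fin n → α) → ℝ≥0∞} (hf : Measurable f) :
    ∫⁻ x in D, f (Fin.removeNth i x) = ∫⁻ y, f y * sectionVolume D i y := by
  have hE := (volume_preserving_piFinSuccAbove (fun _ : Fin (n + 1) => α) i).symm
  have hg : Measurable (D.indicator fun x => f (Fin.removeNth i x)) :=
    (hf.comp (measurable_pi_iff.mpr fun _ => measurable_pi_apply _)).indicator hD
  rw [← lintegral_indicator hD, ← hE.lintegral_comp hg, Measure.volume_eq_prod,
    lintegral_prod_symm _ (by exact (hg.comp hE.measurable).aemeasurable)]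
  refine lintegral_congr fun y => ?_
  rw [sectionVolume, ← lintegral_indicator_const (measurableSet_insertNth_mem hD i y)]
  refine lintegral_congr fun v => ?_
  change D.indicator _ (Fin.insertNth i v y) = _
  by_cases hv : Fin.insertNth i v y ∈ D <;> simp [hv]

theorem lintegral_sectionVolume (hD : MeasurableSet D) (i : Fin (n + 1)) :
    ∫⁻ y, sectionVolume D i y = volume D := by
  simpa using (setLIntegral_comp_removeNth hD i measurable_const (f := fun _ => 1)).symm

end Sections

theorem sum_measure_le_of_forall_exists_notMem {β : Type*} [MeasurableSpace β] {μ : Measure β}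
    {k : ℕ} {A : Set β} {V : Fin (k + 1) → Set β} (hA : μ A ≠ ∞) (hV : ∀ j, MeasurableSet (V j))
    (hVA : ∀ j, V j ⊆ A) (hcov : ∀ a ∈ A, ∃ j, a ∉ V j) :
    ∑ j, μ (V j) ≤ k * μ A := by
  have hcompl : μ A ≤ ∑ j, μ (A \ V j) := calc
    μ A ≤ μ (⋃ j, A \ V j) := measure_mono fun a ha =>
      Set.mem_iUnion.mpr ((hcov a ha).imp fun _ => And.intro ha)
    _ ≤ ∑ j, μ (A \ V j) := measure_iUnion_fintype_le μ _
  have hsplit : ∀ j, μ (V j) + μ (A \ V j) = μ A := fun j => by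
    rw [← measure_inter_add_sdiff A (hV j), Set.inter_eq_right.mpr (hVA j)]
  refine (ENNReal.add_le_add_iff_right hA).mp ?_
  calc ∑ j, μ (V j) + μ A ≤ ∑ j, μ (V j) + ∑ j, μ (A \ V j) := by gcongr
    _ = (k + 1) * μ A := by simp [← Finset.sum_add_distrib, hsplit]
    _ = k * μ A + μ A := by ring

theorem unitCube_eq_Icc (n : ℕ) : unitCube n = Set.Icc 0 1 := by
  ext; simp [unitCube, Pi.le_def, forall_and]

theorem measurableSet_unitCube (n : ℕ) : MeasurableSet (unitCube n) :=
  unitCube_eq_Icc n ▸ measurableSet_Icc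

theorem volume_unitCube (n : ℕ) : volume (unitCube n) = 1 := by
  simp [unitCube_eq_Icc, Real.volume_Icc_pi]

theorem insertNth_mem_unitCube_iff {n : ℕ} (i : Fin (n + 1)) (v : ℝ) (y : Fin n → ℝ) :
    Fin.insertNth i v y ∈ unitCube (n + 1) ↔ v ∈ Set.Icc 0 1 ∧ y ∈ unitCube n := by
  simp [unitCube, Fin.forall_iff_succAbove i]

theorem sectionVolume_eq_zero_of_notMem {n : ℕ} {D : Set (Fin (n + 1) → ℝ)}
    (hD : D ⊆ unitCube (n + 1)) (i : Fin (n + 1)) {y : Fin n → ℝ} (hy : y ∉ unitCube n) :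
    sectionVolume D i y = 0 := by
  refine measure_mono_null (fun v hv => ?_) measure_empty
  exact hy ((insertNth_mem_unitCube_iff i v y).mp (hD hv)).2

section Covering

variable {n : ℕ} {C : Set (Fin (n + 1) → ℝ)}

theorem sum_sectionVolume_predAbove_le (hC : MeasurableSet C) (hcov : CoversCube (n + 1) (n + 2) C)
    {x : Fin (n + 1) → ℝ} (hx : x ∈ unitCube (n + 1) \ C) (q : Fin (n + 2)) :
    ∑ j : Fin (n + 1), sectionVolume (unitCube (n + 1) \ C) (j.predAbove q) (Fin.removeNth j x)
      ≤ n := by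
  have hD := (measurableSet_unitCube (n + 1)).diff hC
  have hIcc : volume (Set.Icc (0 : ℝ) 1) = 1 := by simp
  refine (sum_measure_le_of_forall_exists_notMem (A := Set.Icc 0 1) (by simp [hIcc])
    (fun j => measurableSet_insertNth_mem hD _ _) (fun j v hv => ?_) fun v hv => ?_).trans_eq
    (by rw [hIcc, mul_one])
  · exact ((insertNth_mem_unitCube_iff _ v _).mp hv.1).1
  · obtain ⟨z, hzC, hz⟩ := hcov _ ((insertNth_mem_unitCube_iff q v x).mpr ⟨hv, hx.1⟩)
    obtain ⟨j, rfl⟩ := hz.exists_eq_insertNth_predAbove (by rintro rfl; exact hx.2 hzC)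
    exact ⟨j, fun h => h.2 hzC⟩

theorem sum_lintegral_sectionVolume_predAbove_mul_le (hC : MeasurableSet C)
    (hcov : CoversCube (n + 1) (n + 2) C) (q : Fin (n + 2)) :
    ∑ j : Fin (n + 1), ∫⁻ y, sectionVolume (unitCube (n + 1) \ C) (j.predAbove q) y *
      sectionVolume (unitCube (n + 1) \ C) j y ≤ n * volume (unitCube (n + 1) \ C) := by
  have hD := (measurableSet_unitCube (n + 1)).diff hC
  have hrem (j : Fin (n + 1)) : Measurable (Fin.removeNth (α := fun _ => ℝ) j) :=
    measurable_pi_iff.mpr fun _ => measurable_pi_apply _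
  simp_rw [← setLIntegral_comp_removeNth hD _ (measurable_sectionVolume hD _)]
  rw [← lintegral_finsetSum _ (by exact fun j _ => (measurable_sectionVolume hD _).comp (hrem j)),
    ← setLIntegral_const]
  exact setLIntegral_mono measurable_const fun x hx => sum_sectionVolume_predAbove_le hC hcov hx q

end Covering

theorem ENNReal.two_mul_le_add_sq (a b : ℝ≥0∞) : 2 * a * b ≤ a ^ 2 + b ^ 2 := by
  rcases eq_top_or_lt_top a with rfl | ha
  · rcases eq_zero_or_pos b with rfl | hb <;> simp [*, ENNReal.top_pow, ENNReal.mul_top]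
  rcases eq_top_or_lt_top b with rfl | hb
  · simp
  lift a to NNReal using ha.ne
  lift b to NNReal using hb.ne
  exact_mod_cast _root_.two_mul_le_add_sq a b

theorem sq_lintegral_le_measure_univ_mul_lintegral_sq {β : Type*} [MeasurableSpace β]
    (μ : Measure β) {f : β → ℝ≥0∞} (hf : Measurable f) :
    (∫⁻ x, f x ∂μ) ^ 2 ≤ μ Set.univ * ∫⁻ x, f x ^ 2 ∂μ := by
  refine (ENNReal.mul_le_mul_iff_right two_ne_zero ofNat_ne_top).mp ?_
  have inner_mul (x : β) : ∫⁻ y, 2 * f x * f y ∂μ = 2 * f x * ∫⁻ y, f y ∂μ :=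
    lintegral_const_mul _ hf
  have inner_add (x : β) :
      ∫⁻ y, (f x ^ 2 + f y ^ 2) ∂μ = f x ^ 2 * μ Set.univ + ∫⁻ y, f y ^ 2 ∂μ := by
    rw [lintegral_add_left measurable_const, lintegral_const]
  calc 2 * (∫⁻ x, f x ∂μ) ^ 2 = ∫⁻ x, ∫⁻ y, 2 * f x * f y ∂μ ∂μ := by
        simp_rw [inner_mul, lintegral_mul_const _ (hf.const_mul 2), lintegral_const_mul _ hf]
        ring
    _ ≤ ∫⁻ x, ∫⁻ y, (f x ^ 2 + f y ^ 2) ∂μ ∂μ := by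
        gcongr with x y
        exact ENNReal.two_mul_le_add_sq _ _
    _ = 2 * (μ Set.univ * ∫⁻ x, f x ^ 2 ∂μ) := by
        simp_rw [inner_add]
        rw [lintegral_add_right _ measurable_const, lintegral_mul_const _ (hf.pow_const 2),
          lintegral_const]
        ring

theorem ENNReal.sq_sum_le_card_mul_sum_sq {ι : Type*} [Fintype ι] (f : ι → ℝ≥0∞) :
    (∑ i, f i) ^ 2 ≤ Fintype.card ι * ∑ i, f i ^ 2 := by
  let : MeasurableSpace ι := ⊤
  simpa [lintegral_fintype] using
    sq_lintegral_le_measure_univ_mul_lintegral_sq Measure.count (f := f) .of_discrete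

section SecondMoment

variable {β : Type*} [MeasurableSpace β] {μ : Measure β} {n : ℕ} {d : Fin (n + 1) → β → ℝ≥0∞}
  {m : ℝ≥0∞}

theorem lintegral_sq_sum_le_of_sum_lintegral_predAbove_mul_le (hd : ∀ j, Measurable (d j))
    (hpair : ∀ q : Fin (n + 2), ∑ j, ∫⁻ y, d (j.predAbove q) y * d j y ∂μ ≤ n * m) :
    ∫⁻ y, (∑ j, d j y) ^ 2 ∂μ ≤ (n + 1) * (n * m) := by
  have hS : Measurable fun y => (∑ j, d j y) ^ 2 :=
    (Finset.measurable_sum _ fun j _ => hd j).pow_const 2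
  have hprod (q : Fin (n + 2)) (j : Fin (n + 1)) :
      Measurable fun y => d (j.predAbove q) y * d j y :=
    (hd _).mul (hd j)
  have hsum : ∫⁻ y, (∑ j, d j y) ^ 2 ∂μ + ∫⁻ y, ∑ j, d j y ^ 2 ∂μ ≤ (n + 2) * (n * m) := calc
    _ = ∑ q : Fin (n + 2), ∑ j, ∫⁻ y, d (j.predAbove q) y * d j y ∂μ := by
      simp_rw [← lintegral_add_left hS, ← Fin.sum_sum_predAbove_mul]
      rw [lintegral_finsetSum _ fun q _ => Finset.measurable_sum _ fun j _ => hprod q j]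
      simp_rw [lintegral_finsetSum _ fun j _ => hprod _ j]
    _ ≤ ∑ _q : Fin (n + 2), n * m := Finset.sum_le_sum fun q _ => hpair q
    _ = (n + 2) * (n * m) := by simp
  have hST : ∫⁻ y, (∑ j, d j y) ^ 2 ∂μ ≤ (n + 1) * ∫⁻ y, ∑ j, d j y ^ 2 ∂μ := by
    rw [← lintegral_const_mul' _ _ (by simp)]
    exact lintegral_mono fun y => by simpa using ENNReal.sq_sum_le_card_mul_sum_sq (d · y)
  refine (ENNReal.mul_le_mul_iff_right (a := n + 2) (by simp) (by simp)).mp ?_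
  calc (n + 2) * ∫⁻ y, (∑ j, d j y) ^ 2 ∂μ
      = (n + 1) * ∫⁻ y, (∑ j, d j y) ^ 2 ∂μ + ∫⁻ y, (∑ j, d j y) ^ 2 ∂μ := by ring
    _ ≤ (n + 1) * ∫⁻ y, (∑ j, d j y) ^ 2 ∂μ + (n + 1) * ∫⁻ y, ∑ j, d j y ^ 2 ∂μ := by gcongr
    _ ≤ (n + 1) * ((n + 2) * (n * m)) := by rw [← mul_add]; gcongr
    _ = (n + 2) * ((n + 1) * (n * m)) := by ring

theorem add_one_mul_le_of_sum_lintegral_predAbove_mul_le {K : Set β} (hK : μ K ≤ 1)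
    (hd : ∀ j, Measurable (d j)) (hdK : ∀ j, ∀ y ∉ K, d j y = 0)
    (hm : ∀ j, ∫⁻ y, d j y ∂μ = m) (hm_top : m ≠ ∞)
    (hpair : ∀ q : Fin (n + 2), ∑ j, ∫⁻ y, d (j.predAbove q) y * d j y ∂μ ≤ n * m) :
    (n + 1) * m ≤ n := by
  have hS : ∫⁻ y, ∑ j, d j y ∂μ = (n + 1) * m := by
    simp [lintegral_finsetSum _ fun j _ => hd j, hm]
  have hsupp : Function.support (fun y => ∑ j, d j y) ⊆ K := fun y hy => by
    by_contra hyK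
    exact hy (Finset.sum_eq_zero fun j _ => hdK j y hyK)
  have hCS : ((n + 1) * m) ^ 2 ≤ ((n + 1) * m) * n := calc
    ((n + 1) * m) ^ 2 = (∫⁻ y in K, ∑ j, d j y ∂μ) ^ 2 := by
      rw [setLIntegral_eq_of_support_subset hsupp, hS]
    _ ≤ μ K * ∫⁻ y in K, (∑ j, d j y) ^ 2 ∂μ := by
      simpa using sq_lintegral_le_measure_univ_mul_lintegral_sq (μ.restrict K)
        (Finset.measurable_sum _ fun j _ => hd j)
    _ ≤ 1 * ∫⁻ y, (∑ j, d j y) ^ 2 ∂μ := by gcongr; exact Measure.restrict_le_self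
    _ ≤ (n + 1) * (n * m) := by
      rw [one_mul]; exact lintegral_sq_sum_le_of_sum_lintegral_predAbove_mul_le hd hpair
    _ = ((n + 1) * m) * n := by ring
  rcases eq_or_ne m 0 with rfl | hm0
  · simp
  rw [sq] at hCS
  exact (ENNReal.mul_le_mul_iff_right (by simp [hm0]) (ENNReal.mul_ne_top (by simp) hm_top)).mp hCS

end SecondMoment

theorem ENNReal.one_div_add_one_le_of_add_eq_one {a b : ℝ≥0∞} {n : ℕ} (hab : a + b = 1)
    (hb : (n + 1) * b ≤ n) : 1 / (n + 1) ≤ a := by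
  rw [ENNReal.div_le_iff (by simp) (by simp), mul_comm]
  refine (ENNReal.add_le_add_iff_right (natCast_ne_top n)).mp ?_
  calc 1 + (n : ℝ≥0∞) = (n + 1) * (a + b) := by rw [hab]; ring
    _ ≤ (n + 1) * a + n := by rw [mul_add]; gcongr

theorem measure_coveringCode_ge_general {r : ℕ} (hr : 2 ≤ r) (C : Set (Fin r → ℝ))
    (hmeas : MeasurableSet C)
    (hcov : CoversCube r (r + 1) C) :
    1 / (r : ℝ≥0∞) ≤ volume C := by
  obtain ⟨n, rfl⟩ : ∃ n, r = n + 1 := ⟨r - 1, by omega⟩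
  have hD : MeasurableSet (unitCube (n + 1) \ C) := (measurableSet_unitCube _).diff hmeas
  have hsplit : volume (unitCube (n + 1) ∩ C) + volume (unitCube (n + 1) \ C) = 1 := by
    rw [measure_inter_add_sdiff _ hmeas, volume_unitCube]
  have hD_le : (n + 1) * volume (unitCube (n + 1) \ C) ≤ n :=
    add_one_mul_le_of_sum_lintegral_predAbove_mul_le (volume_unitCube n).le
      (measurable_sectionVolume hD)
      (fun j _ hy => sectionVolume_eq_zero_of_notMem Set.sdiff_subset j hy)
      (lintegral_sectionVolume hD) (ne_top_of_le_ne_top one_ne_top (hsplit ▸ le_add_self))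
      (sum_lintegral_sectionVolume_predAbove_mul_le hmeas hcov)
  calc 1 / ((n + 1 : ℕ) : ℝ≥0∞) ≤ volume (unitCube (n + 1) ∩ C) := by
        exact_mod_cast ENNReal.one_div_add_one_le_of_add_eq_one hsplit hD_le
    _ ≤ volume C := measure_mono Set.inter_subset_right

/-- If `C ⊆ [0,1]^r` (with `r ≥ 2`) is Lebesgue measurable and covers
`[0,1]^{r+1}`, then `λ(C) ≥ 1/r`. -/
theorem measure_coveringCode_ge {r : ℕ} (hr : 2 ≤ r) (C : Set (Fin r → ℝ))
    (hsub : C ⊆ unitCube r) (hmeas : MeasurableSet C)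
    (hcov : CoversCube r (r + 1) C) :
    1 / (r : ℝ≥0∞) ≤ volume C :=
  measure_coveringCode_ge_general hr C hmeas hcov
end

section
/- Inverse Bonferroni inequality: Let (Ω, λ) be a probability space, let C_1,…,C_k ⊆ Ω be measurable sets, and let T be a tree with vertex set {1,2,…,k} and edge set E(T). Then λ(⋃_{i=1}^k C_i) ≤ Σ_{i=1}^k λ(C_i) − Σ_{{i,j}∈E(T)} λ(C_i ∩ C_j). -/
/-! At a point `ω`, let `S` be the set of indices `i` with `ω ∈ C i`. The edges `e` of the tree
with `ω ∈ C_e` are exactly the edges of the induced forest `T[S]`, of which there are at most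
`|S| - 1` when `S` is nonempty. Hence `1_{⋃ C_i} + Σ_e 1_{C_e} ≤ Σ_i 1_{C_i}` pointwise, and
integrating this gives the inequality. -/

open MeasureTheory Filter Topology ENNReal

open Finset

namespace SimpleGraph

variable {V : Type*} {G : SimpleGraph V}

theorem IsAcyclic.card_edgeFinset_lt [Fintype V] [Nonempty V] [Fintype G.edgeSet]
    (hG : G.IsAcyclic) : #G.edgeFinset < Fintype.card V := by
  obtain ⟨T, hGT, -, hT⟩ := connected_top.exists_isTree_le_of_le_of_isAcyclic le_top hG
  classical
  calc #G.edgeFinset ≤ #T.edgeFinset := card_le_card (edgeFinset_mono hGT)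
    _ < Fintype.card V := by rw [← hT.card_edgeFinset]; omega

theorem IsAcyclic.card_filter_edgeFinset_toFinset_subset_lt [Fintype V] [DecidableEq V]
    [DecidableRel G.Adj] (hG : G.IsAcyclic) {s : Finset V} (hs : s.Nonempty) :
    #{e ∈ G.edgeFinset | e.toFinset ⊆ s} < #s := by
  have := hs.to_subtype
  rw [card_filter_edgeFinset_toFinset_subset, ← Fintype.card_coe s]
  exact (hG.induce s).card_edgeFinset_lt

theorem IsAcyclic.indicator_iUnion_add_sum_indicator_iInter_le [Fintype V] [DecidableRel G.Adj]
    (hG : G.IsAcyclic) {Ω : Type*} (C : V → Set Ω) (ω : Ω) :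
    (⋃ i, C i).indicator (1 : Ω → ℝ) ω + ∑ e ∈ G.edgeFinset, (⋂ i ∈ e, C i).indicator 1 ω ≤
      ∑ i, (C i).indicator 1 ω := by
  classical
  set s : Finset V := {i | ω ∈ C i}
  have hedges (e : Sym2 V) : ω ∈ ⋂ i ∈ e, C i ↔ e.toFinset ⊆ s := by simp [subset_iff, s]
  simp only [Set.indicator_apply, Pi.one_apply, hedges, sum_boole]
  split_ifs with hω
  · obtain ⟨i, hi⟩ := Set.mem_iUnion.1 hω
    have hs : s.Nonempty := ⟨i, by simpa [s] using hi⟩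
    have := hG.card_filter_edgeFinset_toFinset_subset_lt hs
    change 1 + (_ : ℝ) ≤ (#s : ℕ)
    norm_cast
    omega
  · have hs : s = ∅ := by
      ext i
      simpa [s] using fun hi => hω (Set.mem_iUnion.2 ⟨i, hi⟩)
    simp [hs]

end SimpleGraph

namespace MeasureTheory

theorem measureReal_add_sum_le_sum_of_indicator_le {Ω ι κ : Type*} [MeasurableSpace Ω]
    {μ : Measure Ω} [IsFiniteMeasure μ] {D : Set Ω} {A : ι → Set Ω} {B : κ → Set Ω}
    {s : Finset ι} {t : Finset κ} (hD : MeasurableSet D) (hA : ∀ i ∈ s, MeasurableSet (A i))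
    (hB : ∀ j ∈ t, MeasurableSet (B j))
    (h : ∀ ω, D.indicator (1 : Ω → ℝ) ω + ∑ j ∈ t, (B j).indicator 1 ω ≤
      ∑ i ∈ s, (A i).indicator 1 ω) :
    μ.real D + ∑ j ∈ t, μ.real (B j) ≤ ∑ i ∈ s, μ.real (A i) := by
  have hint : ∀ {E : Set Ω}, MeasurableSet E → Integrable (E.indicator (1 : Ω → ℝ)) μ :=
    fun hE => (integrable_const 1).indicator hE
  have hintB := integrable_finsetSum t fun j hj => hint (hB j hj)
  calc μ.real D + ∑ j ∈ t, μ.real (B j)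
      = ∫ ω, D.indicator 1 ω + ∑ j ∈ t, (B j).indicator 1 ω ∂μ := by
        rw [integral_add (hint hD) hintB, integral_finsetSum t fun j hj => hint (hB j hj),
          integral_indicator_one hD]
        exact congrArg _ (sum_congr rfl fun j hj => (integral_indicator_one (hB j hj)).symm)
    _ ≤ ∫ ω, ∑ i ∈ s, (A i).indicator 1 ω ∂μ :=
        integral_mono ((hint hD).add hintB) (integrable_finsetSum s fun i hi => hint (hA i hi)) h
    _ = ∑ i ∈ s, μ.real (A i) := by
        rw [integral_finsetSum s fun i hi => hint (hA i hi)]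
        exact sum_congr rfl fun i hi => integral_indicator_one (hA i hi)

end MeasureTheory

/-- Inverse Bonferroni inequality: for a probability space `(Ω, μ)`, measurable
sets `C_1, …, C_k` and a tree `T` on the vertex set `{1,…,k}`,
`μ(⋃ᵢ Cᵢ) ≤ Σᵢ μ(Cᵢ) − Σ_{e ∈ E(T)} μ(C_e)`. -/
theorem inverse_bonferroni {Ω : Type*} [MeasurableSpace Ω] (μ : Measure Ω)
    [IsProbabilityMeasure μ] {k : ℕ} (C : Fin k → Set Ω)
    (hC : ∀ i, MeasurableSet (C i)) (G : SimpleGraph (Fin k)) [DecidableRel G.Adj]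
    (hT : G.IsTree) :
    (μ (⋃ i, C i)).toReal ≤
      ∑ i, (μ (C i)).toReal - ∑ e ∈ G.edgeFinset, (μ (⋂ i ∈ e, C i)).toReal := by
  have := measureReal_add_sum_le_sum_of_indicator_le (μ := μ) (MeasurableSet.iUnion hC)
    (fun i _ => hC i) (fun e _ => .iInter fun i => .iInter fun _ => hC i)
    (hT.isAcyclic.indicator_iUnion_add_sum_indicator_iInter_le C)
  exact le_sub_iff_add_le.mpr this
end

section
/- Let r ≥ 2, let X be a set, and let C ⊆ X^r cover X^{r+1}. With C_i ⊆ X^{r+1} (1 ≤ i ≤ r+1) the set of sequences whose length-r subsequence obtained by deleting the i-th coordinate lies in C, K = ⋂_{i=1}^{r+1} C_i, P_i = C_i \ ⋃_{j≠i} C_j, R = X^{r+1} \ (K ∪ ⋃_i P_i), and ⟨R⟩ the symmetric closure of R, the set K \ ⟨R⟩ is symmetric, i.e., closed under all permutations of the r+1 coordinates. -/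
open MeasureTheory Filter Topology ENNReal

/-! Swapping the adjacent coordinates `i` and `i+1` of `z` exchanges the subsequences obtained
by deleting coordinate `i` and coordinate `i+1`. Hence the swap maps every point of
`K = ⋂ Cᵢ` into `C_i ∩ C_{i+1}`, which meets no `P_j`, so the image lies in `K` or in `R`.
Since adjacent transpositions generate the symmetric group, a point of `K` whose orbit avoids
`R` has its whole orbit in `K`. -/

open Equiv

section SymClosure

variable {X : Type*} {k : ℕ}

lemma comp_perm_mem_symClosure_iff {M : Set (Fin k → X)} {x : Fin k → X} (σ : Perm (Fin k)) :
    x ∘ σ ∈ SymClosure M ↔ x ∈ SymClosure M := by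
  constructor
  · rintro ⟨τ, hτ⟩
    exact ⟨σ * τ, hτ⟩
  · rintro ⟨τ, hτ⟩
    refine ⟨σ⁻¹ * τ, ?_⟩
    convert hτ using 1
    ext
    simp

theorem isSymmetric_diff_symClosure_of_closure_eq_top {K R : Set (Fin k → X)}
    {S : Set (Perm (Fin k))} (hS : Submonoid.closure S = ⊤)
    (hstep : ∀ z ∈ K, ∀ s ∈ S, z ∘ s ∈ K ∪ R) : IsSymmetric (K \ SymClosure R) := by
  intro x hx σ
  have hσ : σ ∈ Submonoid.closure S := hS ▸ Submonoid.mem_top σ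
  induction hσ using Submonoid.closure_induction generalizing x with
  | mem s hs =>
    refine ⟨(hstep x hx.1 s hs).resolve_right fun hR => hx.2 ⟨s, hR⟩, ?_⟩
    rw [comp_perm_mem_symClosure_iff]
    exact hx.2
  | one => exact hx
  | mul a b _ _ iha ihb => exact ihb (x ∘ a) (iha x hx)

end SymClosure

lemma notMem_iUnion_diff_iUnion_ne_of_mem_of_mem {ι α : Type*} {S : ι → Set α} {x : α}
    {a b : ι} (hab : a ≠ b) (ha : x ∈ S a) (hb : x ∈ S b) :
    x ∉ ⋃ i, (S i \ ⋃ j, ⋃ (_ : j ≠ i), S j) := by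
  simp only [Set.mem_iUnion, Set.mem_sdiff, not_exists, not_and]
  intro i _ hprivate
  by_cases hai : a = i
  · exact hprivate b (fun hbi => hab (hai.trans hbi.symm)) hb
  · exact hprivate a hai ha

section DeleteAt

variable {X : Type*} {r : ℕ}

lemma swap_castSucc_succ_succAbove_castSucc (i k : Fin r) :
    swap i.castSucc i.succ (i.castSucc.succAbove k) = i.succ.succAbove k := by
  rcases lt_trichotomy k i with h | rfl | h
  · rw [Fin.succAbove_of_castSucc_lt _ _ (by simpa using h),
      Fin.succAbove_of_castSucc_lt _ _ (Fin.castSucc_lt_succ_iff.mpr h.le),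
      swap_apply_of_ne_of_ne (by simp [Fin.ext_iff]; omega) (by simp [Fin.ext_iff]; omega)]
  · rw [Fin.succAbove_castSucc_self, swap_apply_right,
      Fin.succAbove_of_castSucc_lt _ _ Fin.castSucc_lt_succ]
  · rw [Fin.succAbove_of_le_castSucc _ _ (Fin.castSucc_le_castSucc_iff.mpr h.le),
      Fin.succAbove_of_le_castSucc _ _ (Fin.succ_le_castSucc_iff.mpr h),
      swap_apply_of_ne_of_ne (by simp [Fin.ext_iff]; omega) (by simp [Fin.ext_iff]; omega)]

lemma deleteAt_castSucc_comp_swap (i : Fin r) (z : Fin (r + 1) → X) :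
    deleteAt i.castSucc (z ∘ swap i.castSucc i.succ) = deleteAt i.succ z := by
  funext k
  simp only [deleteAt, Function.comp_apply, swap_castSucc_succ_succAbove_castSucc]

lemma deleteAt_succ_comp_swap (i : Fin r) (z : Fin (r + 1) → X) :
    deleteAt i.succ (z ∘ swap i.castSucc i.succ) = deleteAt i.castSucc z := by
  funext k
  rw [deleteAt, deleteAt, Function.comp_apply, Function.comp_apply, Function.comp_apply,
    ← swap_castSucc_succ_succAbove_castSucc, swap_apply_self]

lemma comp_swap_mem_extSet {C : Set (Fin r → X)} {z : Fin (r + 1) → X}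
    (hz : z ∈ ⋂ j, extSet C j) (i : Fin r) :
    z ∘ swap i.castSucc i.succ ∈ extSet C i.castSucc ∩ extSet C i.succ := by
  rw [Set.mem_iInter] at hz
  constructor
  · rw [extSet, Set.mem_ofPred_eq, deleteAt_castSucc_comp_swap]
    exact hz i.succ
  · rw [extSet, Set.mem_ofPred_eq, deleteAt_succ_comp_swap]
    exact hz i.castSucc

end DeleteAt

theorem kernel_diff_symClosure_symmetric_general {X : Type*} {r : ℕ}
    (C : Set (Fin r → X)) :
    IsSymmetric ((⋂ i, extSet C i) \
      SymClosure (Set.univ \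
        ((⋂ i, extSet C i) ∪
          ⋃ i, (extSet C i \ ⋃ j, ⋃ (_ : j ≠ i), extSet C j)))) := by
  refine isSymmetric_diff_symClosure_of_closure_eq_top (Perm.mclosure_swap_castSucc_succ r) ?_
  rintro z hz _ ⟨i, rfl⟩
  obtain ⟨h₁, h₂⟩ := comp_swap_mem_extSet hz i
  by_cases hK : z ∘ swap i.castSucc i.succ ∈ ⋂ j, extSet C j
  · exact Or.inl hK
  · refine Or.inr ⟨trivial, ?_⟩
    rintro (h | h)
    exacts [hK h, notMem_iUnion_diff_iUnion_ne_of_mem_of_mem Fin.castSucc_lt_succ.ne h₁ h₂ h]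

/-- For `r ≥ 2`, a set `X` and `C ⊆ X^r` covering `X^{r+1}`, with
`K = ⋂ᵢ Cᵢ`, `Pᵢ = Cᵢ \ ⋃_{j≠i} Cⱼ`, `R = X^{r+1} \ (K ∪ ⋃ᵢ Pᵢ)` and `⟨R⟩` the symmetric
closure of `R`, the set `K \ ⟨R⟩` is symmetric. -/
theorem kernel_diff_symClosure_symmetric {X : Type*} {r : ℕ} (hr : 2 ≤ r)
    (C : Set (Fin r → X)) (hcov : IsCoveringCode r (r + 1) C) :
    IsSymmetric ((⋂ i, extSet C i) \
      SymClosure (Set.univ \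
        ((⋂ i, extSet C i) ∪
          ⋃ i, (extSet C i \ ⋃ j, ⋃ (_ : j ≠ i), extSet C j)))) :=
  kernel_diff_symClosure_symmetric_general C
end

section
/- For all positive integers r < k with r ≥ 2, s(k,r) ≤ t(k,r), where s(k,r) = lim_{n→∞} S(n,k,r)/n^r is the optimal asymptotic density of covering (k−r)-insertion codes and t(k,r) = lim_{n→∞} T(n,k,r)/C(n,r) is the Turán density. -/
open MeasureTheory Filter Topology ENNReal

lemma turan_exists {r k : ℕ} (hrk : r ≤ k) (n : ℕ) :
    ∃ F : Finset (Finset (Fin n)), IsTuranSystem n k r F ∧ F.card = turanNum n k r := by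
  have hne : {m | ∃ F : Finset (Finset (Fin n)), IsTuranSystem n k r F ∧ F.card = m}.Nonempty := by
    refine ⟨_, Finset.powersetCard r (Finset.univ : Finset (Fin n)), ⟨?_, ?_⟩, rfl⟩
    · intro A hA; exact (Finset.mem_powersetCard_univ.mp hA)
    · intro K hK
      obtain ⟨A, hAK, hA⟩ := Finset.exists_subset_card_eq (hK ▸ hrk)
      exact ⟨A, Finset.mem_powersetCard_univ.mpr hA, hAK⟩
  obtain ⟨F, hF, hc⟩ := Nat.sInf_mem hne
  exact ⟨F, hF, hc⟩

lemma fiber_card {r n : ℕ} (A : Finset (Fin n)) (hA : A.card = r)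
    (s : Finset (Fin r → Fin n))
    (hs : ∀ x ∈ s, Finset.image x Finset.univ = A) : s.card ≤ r.factorial := by
  classical
  have hmem : ∀ (x : Fin r → Fin n), x ∈ s → ∀ i, x i ∈ A := by
    intro x hx i
    rw [← hs x hx]
    exact Finset.mem_image.mpr ⟨i, Finset.mem_univ _, rfl⟩
  have hinj : ∀ (x : Fin r → Fin n), x ∈ s → Function.Injective x := by
    intro x hx
    have hcard : (Finset.image x Finset.univ).card = (Finset.univ : Finset (Fin r)).card := by
      rw [hs x hx, hA, Finset.card_univ, Fintype.card_fin]
    have hio := Finset.injOn_of_card_image_eq hcard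
    intro i j hij
    exact hio (Finset.mem_univ i) (Finset.mem_univ j) hij
  have key : s.card ≤ Fintype.card (Fin r ↪ {a // a ∈ A}) := by
    rw [← Fintype.card_coe]
    have hinj2 : ∀ x : {x // x ∈ s},
        Function.Injective (fun i => (⟨x.1 i, hmem x.1 x.2 i⟩ : {a // a ∈ A})) := by
      intro x i j hij
      exact hinj x.1 x.2 (congrArg Subtype.val hij)
    apply Fintype.card_le_of_injective (fun x => (⟨_, hinj2 x⟩ : Fin r ↪ {a // a ∈ A}))
    intro x y hxy
    apply Subtype.ext
    funext i
    exact congrArg Subtype.val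
      (congrFun (congrArg (fun e : Fin r ↪ {a // a ∈ A} => (e : Fin r → {a // a ∈ A})) hxy) i)
  calc s.card ≤ Fintype.card (Fin r ↪ {a // a ∈ A}) := key
    _ = (Fintype.card {a // a ∈ A}).descFactorial r := by
        rw [Fintype.card_embedding_eq, Fintype.card_fin]
    _ = r.descFactorial r := by rw [Fintype.card_coe, hA]
    _ = r.factorial := Nat.descFactorial_self r

lemma covNum_le_aux {r k : ℕ} (hr : 2 ≤ r) (hrk : r < k) (n : ℕ) :
    covNum n k r ≤ r.factorial * turanNum n k r + (n ^ r - n.descFactorial r) := by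
  classical
  obtain ⟨F, hF, hFcard⟩ := turan_exists hrk.le n
  set C : Finset (Fin r → Fin n) :=
    Finset.univ.filter (fun x => ¬ Function.Injective x ∨
      (Function.Injective x ∧ Finset.image x Finset.univ ∈ F)) with hC
  have hcov : IsCoveringCode r k (↑C : Set (Fin r → Fin n)) := by
    intro a
    by_cases ha : Function.Injective a
    · have hK : (Finset.image a Finset.univ).card = k := by
        rw [Finset.card_image_of_injective _ ha, Finset.card_univ, Fintype.card_fin]
      obtain ⟨A, hAF, hAK⟩ := hF.2 _ hK
      have hAcard : A.card = r := hF.1 A hAF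
      set S : Finset (Fin k) := Finset.univ.filter (fun j => a j ∈ A) with hS
      have himg : Finset.image a S = A := by
        apply Finset.Subset.antisymm
        · intro x hx
          obtain ⟨j, hj, rfl⟩ := Finset.mem_image.mp hx
          exact (Finset.mem_filter.mp hj).2
        · intro x hx
          obtain ⟨j, _, rfl⟩ := Finset.mem_image.mp (hAK hx)
          exact Finset.mem_image.mpr ⟨j, Finset.mem_filter.mpr ⟨Finset.mem_univ _, hx⟩, rfl⟩
      have hScard : S.card = r := by
        rw [← hAcard, ← himg, Finset.card_image_of_injective _ ha]
      set e := S.orderIsoOfFin hScard with he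
      set g : Fin r → Fin k := fun i => (e i : Fin k) with hg
      have hgmono : StrictMono g := fun i j hij => e.strictMono hij
      have hgS : Finset.image g Finset.univ = S := by
        apply Finset.Subset.antisymm
        · intro j hj
          obtain ⟨i, _, rfl⟩ := Finset.mem_image.mp hj
          exact (e i).2
        · intro j hj
          exact Finset.mem_image.mpr ⟨e.symm ⟨j, hj⟩, Finset.mem_univ _, by simp [hg]⟩
      have himg2 : Finset.image (a ∘ g) Finset.univ = A := by
        rw [← Finset.image_image, hgS, himg]
      refine ⟨a ∘ g, ?_, g, hgmono, fun i => rfl⟩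
      rw [hC]
      simp only [Finset.coe_filter, Set.mem_setOf_eq, Finset.mem_univ, true_and]
      exact Or.inr ⟨ha.comp hgmono.injective, himg2 ▸ hAF⟩
    · rw [Function.not_injective_iff] at ha
      obtain ⟨p, q, hpq, hne⟩ := ha
      wlog hlt : p < q generalizing p q
      · exact this q p hpq.symm hne.symm (by omega)
      obtain ⟨S, hS₀S, hScard⟩ := Finset.exists_superset_card_eq
        (show ({p, q} : Finset (Fin k)).card ≤ r by
          rw [Finset.card_pair hne]; omega)
        (by rw [Fintype.card_fin]; omega)
      set e := S.orderIsoOfFin hScard with he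
      set g : Fin r → Fin k := fun i => (e i : Fin k) with hg
      have hgmono : StrictMono g := fun i j hij => e.strictMono hij
      refine ⟨a ∘ g, ?_, g, hgmono, fun i => rfl⟩
      rw [hC]
      simp only [Finset.coe_filter, Set.mem_setOf_eq, Finset.mem_univ, true_and]
      left
      intro hinj
      have hpS : p ∈ S := hS₀S (by simp)
      have hqS : q ∈ S := hS₀S (by simp)
      have h1 : g (e.symm ⟨p, hpS⟩) = p := by simp [hg]
      have h2 : g (e.symm ⟨q, hqS⟩) = q := by simp [hg]
      have heq : e.symm ⟨p, hpS⟩ = e.symm ⟨q, hqS⟩ := by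
        apply hinj
        simp only [Function.comp_apply, h1, h2, hpq]
      have := congrArg g heq
      rw [h1, h2] at this
      exact hne this
  have hmem : C.card ∈ {m | ∃ C : Finset (Fin r → Fin n),
      IsCoveringCode r k (↑C : Set (Fin r → Fin n)) ∧ C.card = m} := ⟨C, hcov, rfl⟩
  refine le_trans (Nat.sInf_le hmem) ?_
  have hsplit : C = Finset.univ.filter (fun x : Fin r → Fin n => ¬ Function.Injective x) ∪
      Finset.univ.filter (fun x => Function.Injective x ∧ Finset.image x Finset.univ ∈ F) := by
    rw [hC, Finset.filter_or]
  have hbad : (Finset.univ.filter (fun x : Fin r → Fin n => ¬ Function.Injective x)).card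
      = n ^ r - n.descFactorial r := by
    have hinjcard : (Finset.univ.filter (fun x : Fin r → Fin n => Function.Injective x)).card
        = n.descFactorial r := by
      rw [← Fintype.card_subtype,
        Fintype.card_congr (Equiv.subtypeInjectiveEquivEmbedding (Fin r) (Fin n)),
        Fintype.card_embedding_eq, Fintype.card_fin, Fintype.card_fin]
    have htot := Finset.card_filter_add_card_filter_not
      (s := (Finset.univ : Finset (Fin r → Fin n)))
      (p := fun x : Fin r → Fin n => Function.Injective x)
    have hcard : (Finset.univ : Finset (Fin r → Fin n)).card = n ^ r := by
      rw [Finset.card_univ, Fintype.card_fun, Fintype.card_fin, Fintype.card_fin]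
    omega
  have hgood : (Finset.univ.filter
      (fun x : Fin r → Fin n => Function.Injective x ∧ Finset.image x Finset.univ ∈ F)).card
      ≤ r.factorial * F.card := by
    set G := Finset.univ.filter
      (fun x : Fin r → Fin n => Function.Injective x ∧ Finset.image x Finset.univ ∈ F) with hG
    have hfib : ∀ A ∈ Finset.image (fun x : Fin r → Fin n => Finset.image x Finset.univ) G,
        (G.filter (fun x => Finset.image x Finset.univ = A)).card ≤ r.factorial := by
      intro A hA
      obtain ⟨x₀, hx₀, rfl⟩ := Finset.mem_image.mp hA
      refine fiber_card _ (hF.1 _ (Finset.mem_filter.mp hx₀).2.2) _ ?_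
      intro x hx
      exact (Finset.mem_filter.mp hx).2
    calc G.card
        ≤ r.factorial * (Finset.image (fun x : Fin r → Fin n => Finset.image x Finset.univ) G).card :=
          Finset.card_le_mul_card_image G r.factorial hfib
      _ ≤ r.factorial * F.card := by
          apply Nat.mul_le_mul_left
          apply Finset.card_le_card
          intro A hA
          obtain ⟨x, hx, rfl⟩ := Finset.mem_image.mp hA
          exact (Finset.mem_filter.mp hx).2.2
  calc C.card ≤ _ + _ := hsplit ▸ Finset.card_union_le _ _
    _ ≤ (n ^ r - n.descFactorial r) + r.factorial * turanNum n k r := by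
        rw [hbad]
        exact Nat.add_le_add le_rfl (hFcard ▸ hgood)
    _ = r.factorial * turanNum n k r + (n ^ r - n.descFactorial r) := Nat.add_comm _ _

lemma desc_tendsto (r : ℕ) :
    Tendsto (fun n : ℕ => (n.descFactorial r : ℝ) / (n : ℝ) ^ r) atTop (𝓝 1) := by
  have h1 : ∀ i : ℕ, Tendsto (fun n : ℕ => ((n : ℝ) - i) / n) atTop (𝓝 1) := by
    intro i
    have h0 := tendsto_const_div_atTop_nhds_zero_nat (i : ℝ)
    have h2 : Tendsto (fun n : ℕ => (1 : ℝ) - (i : ℝ) / n) atTop (𝓝 (1 - 0)) :=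
      tendsto_const_nhds.sub h0
    rw [sub_zero] at h2
    apply h2.congr'
    filter_upwards [eventually_gt_atTop 0] with n hn
    have : (n : ℝ) ≠ 0 := Nat.cast_ne_zero.mpr hn.ne'
    field_simp
  have hp : Tendsto (fun n : ℕ => ∏ i ∈ Finset.range r, ((n : ℝ) - i) / n) atTop (𝓝 1) := by
    have := tendsto_finset_prod (f := fun (i : ℕ) (n : ℕ) => ((n : ℝ) - i) / n) (x := atTop)
      (a := fun _ => 1) (Finset.range r) (fun i _ => h1 i)
    simpa using this
  apply hp.congr'
  filter_upwards [eventually_ge_atTop r] with n hn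
  rw [Finset.prod_div_distrib, Finset.prod_const, Finset.card_range,
    Nat.descFactorial_eq_prod_range, Nat.cast_prod]
  congr 1
  refine Finset.prod_congr rfl fun i hi => ?_
  rw [Nat.cast_sub (le_trans (Finset.mem_range.mp hi).le hn)]

/-- For `2 ≤ r < k`, the optimal covering-code density satisfies
`s(k,r) ≤ t(k,r)`. -/
theorem code_density_le_turan_density {r k : ℕ} (hr : 2 ≤ r) (hrk : r < k) (s t : ℝ)
    (hs : Tendsto (fun n : ℕ => (covNum n k r : ℝ) / (n : ℝ) ^ r) atTop (𝓝 s))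
    (ht : Tendsto (fun n : ℕ => (turanNum n k r : ℝ) / (n.choose r : ℝ)) atTop (𝓝 t)) :
    s ≤ t := by
  have hd := desc_tendsto r
  have hf : Tendsto (fun n : ℕ => (turanNum n k r : ℝ) / (n.choose r : ℝ) *
      ((n.descFactorial r : ℝ) / (n : ℝ) ^ r) + (1 - (n.descFactorial r : ℝ) / (n : ℝ) ^ r))
      atTop (𝓝 (t * 1 + (1 - 1))) :=
    (ht.mul hd).add (tendsto_const_nhds.sub hd)
  have key : ∀ᶠ n in atTop, (covNum n k r : ℝ) / (n : ℝ) ^ r ≤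
      (turanNum n k r : ℝ) / (n.choose r : ℝ) *
      ((n.descFactorial r : ℝ) / (n : ℝ) ^ r) + (1 - (n.descFactorial r : ℝ) / (n : ℝ) ^ r) := by
    filter_upwards [eventually_ge_atTop k, eventually_ge_atTop 1] with n hnk hn1
    have hnr : r ≤ n := le_trans hrk.le hnk
    have hch : (n.choose r : ℝ) ≠ 0 := Nat.cast_ne_zero.mpr (Nat.choose_pos hnr).ne'
    have hnp : (0 : ℝ) < (n : ℝ) ^ r := by positivity
    have hle := covNum_le_aux hr hrk n
    have hcast : (covNum n k r : ℝ) ≤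
        (r.factorial : ℝ) * (turanNum n k r : ℝ) + ((n : ℝ) ^ r - (n.descFactorial r : ℝ)) := by
      have h2 := (Nat.cast_le (α := ℝ)).mpr hle
      rwa [Nat.cast_add, Nat.cast_mul, Nat.cast_sub (Nat.descFactorial_le_pow n r),
        Nat.cast_pow] at h2
    have hdc : (n.descFactorial r : ℝ) = (r.factorial : ℝ) * (n.choose r : ℝ) := by
      rw_mod_cast [Nat.descFactorial_eq_factorial_mul_choose]
    have hfn : (turanNum n k r : ℝ) / (n.choose r : ℝ) *
        ((n.descFactorial r : ℝ) / (n : ℝ) ^ r) + (1 - (n.descFactorial r : ℝ) / (n : ℝ) ^ r)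
        = ((r.factorial : ℝ) * (turanNum n k r : ℝ) +
        ((n : ℝ) ^ r - (n.descFactorial r : ℝ))) / (n : ℝ) ^ r := by
      rw [hdc]
      field_simp
    rw [hfn]
    gcongr
  have := le_of_tendsto_of_tendsto hs hf key
  simpa using this
end
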